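/- Let v₁, v₂ ∈ ℝ² be linearly independent and let Λ = {a·v₁ + b·v₂ : a, b ∈ ℤ} be the lattice they generate. Suppose ⋃_{p∈Λ} closedBall(p, 1) = ℝ² and suppose there exists w ∈ Λ with w ≠ 0 and ‖w‖ ≤ 1. Then det(Λ) = |v₁.1·v₂.2 − v₁.2·v₂.1| ≤ 1 + √3/2. -/

import Mathlib

/-!
Shrink the short vector `w` to a primitive lattice vector `W`, so `‖W‖ ≤ 1`, and complete it to a
basis `W, U` of the lattice with the same determinant `D`. The lattice is then a stack of rows
`n • U + ℤ • W` parallel to `W`, at mutual distance `D / ‖W‖`. If `D > 1 + √3/2`, which is at least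
`‖W‖ * (1 + √(1 - ‖W‖² / 4))`, there is room for a point above the midpoint of `W`, at a height
slightly more than `√(1 - ‖W‖² / 4)`: it is farther than `1` from the row `ℤ • W` by Pythagoras and
from every other row by height alone, so the unit disks do not cover it.
-/

open Metric

noncomputable section

/-- The Euclidean plane. -/
abbrev Pt := EuclideanSpace ℝ (Fin 2)

/-- The lattice generated by `v₁` and `v₂`. -/
def lattice (v₁ v₂ : Pt) : Set Pt := {p | ∃ a b : ℤ, p = (a : ℝ) • v₁ + (b : ℝ) • v₂}

/-- The determinant of the lattice generated by `v₁` and `v₂`. -/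
def latticeDet (v₁ v₂ : Pt) : ℝ := |v₁ 0 * v₂ 1 - v₁ 1 * v₂ 0|

theorem Int.exists_eq_mul_and_det_eq_one {a b : ℤ} (h : a ≠ 0 ∨ b ≠ 0) :
    ∃ (g : ℕ) (a' b' c d : ℤ), 0 < g ∧ a = a' * g ∧ b = b' * g ∧ a' * d - b' * c = 1 := by
  obtain ⟨g, a', b', hg, hcop, rfl, rfl⟩ := Int.exists_gcd_one' (Int.gcd_pos_iff.mpr h)
  obtain ⟨u, v, huv⟩ := Int.isCoprime_iff_gcd_eq_one.mpr hcop
  exact ⟨g, a', b', -v, u, hg, rfl, rfl, by linear_combination huv⟩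

theorem one_half_le_abs_one_half_sub_intCast (m : ℤ) : 1 / 2 ≤ |1 / 2 - (m : ℝ)| := by
  rcases le_or_gt m 0 with hm | hm
  · have : (m : ℝ) ≤ 0 := by exact_mod_cast hm
    rw [abs_of_pos (by linarith)]
    linarith
  · have : (1 : ℝ) ≤ m := by exact_mod_cast hm
    rw [abs_of_neg (by linarith)]
    linarith

theorem mul_one_add_sqrt_one_sub_sq_div_four_le {ℓ : ℝ} (h₀ : 0 ≤ ℓ) (h₁ : ℓ ≤ 1) :
    ℓ * (1 + √(1 - ℓ ^ 2 / 4)) ≤ 1 + √3 / 2 := by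
  have ht : √(1 - ℓ ^ 2 / 4) ^ 2 = 1 - ℓ ^ 2 / 4 := Real.sq_sqrt (by nlinarith)
  have : 2 * ℓ * √(1 - ℓ ^ 2 / 4) ≤ √3 := by
    apply Real.le_sqrt_of_sq_le
    nlinarith [mul_nonneg (by nlinarith : (0 : ℝ) ≤ 1 - ℓ ^ 2) (by nlinarith : (0 : ℝ) ≤ 3 - ℓ ^ 2)]
  nlinarith

namespace Orientation

variable {E : Type*} [NormedAddCommGroup E] [InnerProductSpace ℝ E] [Fact (Module.finrank ℝ E = 2)]
  (o : Orientation ℝ E (Fin 2))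

local notation "ω" => o.areaForm
local notation "J" => o.rightAngleRotation

theorem areaForm_smul_add_smul (a b c d : ℝ) (x y : E) :
    ω (a • x + b • y) (c • x + d • y) = (a * d - b * c) * ω x y := by
  simp only [map_add, map_smul, LinearMap.add_apply, LinearMap.smul_apply, o.areaForm_apply_self,
    o.areaForm_swap y x, smul_eq_mul]
  ring

theorem one_lt_dist_smul_add_smul {W U : E} (hW : W ≠ 0) {y : ℝ} (hy₀ : 0 ≤ y)
    (hy : 1 < ‖W‖ ^ 2 / 4 + y ^ 2) (hyU : (y + 1) * ‖W‖ < |ω W U|) (m n : ℤ) :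
    1 < dist ((1 / 2 : ℝ) • W + (y / ‖W‖) • J W) ((m : ℝ) • W + (n : ℝ) • U) := by
  have hℓ : 0 < ‖W‖ := norm_pos_iff.mpr hW
  set x := (1 / 2 : ℝ) • W + (y / ‖W‖) • J W - ((m : ℝ) • W + (n : ℝ) • U)
  have hinner : inner ℝ W x = (1 / 2 - m) * ‖W‖ ^ 2 - n * inner ℝ W U := by
    simp only [x, inner_sub_right, inner_add_right, inner_smul_right, real_inner_self_eq_norm_sq,
      o.inner_rightAngleRotation_right, o.areaForm_apply_self]
    ring
  have harea : ω W x = y * ‖W‖ - n * ω W U := by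
    simp only [x, map_sub, map_add, map_smul, o.areaForm_apply_self, smul_eq_mul,
      o.areaForm_rightAngleRotation_right, real_inner_self_eq_norm_sq]
    field_simp
    ring
  -- `⟪W, x⟫` and `ω W x` are `‖W‖` times the components of `x` along and across `W`.
  suffices ‖W‖ ^ 2 < inner ℝ W x ^ 2 + ω W x ^ 2 by
    rw [o.inner_sq_add_areaForm_sq, ← dist_eq_norm] at this
    have hsq : 1 < dist _ _ ^ 2 := lt_of_mul_lt_mul_left (by linarith) (sq_nonneg ‖W‖)
    exact (one_lt_sq_iff₀ dist_nonneg).mp hsq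
  rcases eq_or_ne n 0 with rfl | hn
  · have hm : 1 / 4 ≤ (1 / 2 - (m : ℝ)) ^ 2 := by
      rw [← sq_abs]
      nlinarith [one_half_le_abs_one_half_sub_intCast m]
    rw [hinner, harea]
    simp only [Int.cast_zero, zero_mul, sub_zero]
    nlinarith [mul_le_mul_of_nonneg_right hm (pow_pos hℓ 4).le,
      mul_lt_mul_of_pos_right hy (pow_pos hℓ 2)]
  · have hnU : |ω W U| ≤ |n * ω W U| := by
      rw [abs_mul]
      exact le_mul_of_one_le_left (abs_nonneg _) (by exact_mod_cast Int.one_le_abs hn)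
    have hacross : |‖W‖| < |ω W x| := by
      rw [harea, abs_sub_comm, abs_of_pos hℓ]
      linarith [abs_sub_abs_le_abs_sub (n * ω W U) (y * ‖W‖), abs_of_nonneg (mul_nonneg hy₀ hℓ.le)]
    linarith [sq_lt_sq.mpr hacross, sq_nonneg (inner ℝ W x)]

theorem exists_forall_one_lt_dist_smul_add_smul {W U : E} (hW : ‖W‖ ≤ 1)
    (hWU : 1 + √3 / 2 < |ω W U|) :
    ∃ p : E, ∀ m n : ℤ, 1 < dist p ((m : ℝ) • W + (n : ℝ) • U) := by
  have hW₀ : W ≠ 0 := by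
    rintro rfl
    simp only [map_zero, LinearMap.zero_apply, abs_zero] at hWU
    linarith [Real.sqrt_nonneg 3]
  have hℓ : 0 < ‖W‖ := norm_pos_iff.mpr hW₀
  set t := √(1 - ‖W‖ ^ 2 / 4)
  have ht : t ^ 2 = 1 - ‖W‖ ^ 2 / 4 := Real.sq_sqrt (by nlinarith)
  have hkey := mul_one_add_sqrt_one_sub_sq_div_four_le hℓ.le hW
  obtain ⟨y, hty, hyU⟩ : ∃ y, t < y ∧ y < |ω W U| / ‖W‖ - 1 :=
    exists_between (by rw [lt_sub_iff_add_lt, lt_div_iff₀ hℓ]; linarith)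
  rw [lt_sub_iff_add_lt, lt_div_iff₀ hℓ] at hyU
  have ht₀ : 0 ≤ t := Real.sqrt_nonneg _
  refine ⟨_, o.one_lt_dist_smul_add_smul hW₀ (ht₀.trans hty.le) ?_ hyU⟩
  nlinarith [pow_lt_pow_left₀ hty ht₀ two_ne_zero]

end Orientation

open scoped EuclideanSpace

theorem abs_areaForm_eq_latticeDet (o : Orientation ℝ Pt (Fin 2)) (v₁ v₂ : Pt) :
    |o.areaForm v₁ v₂| = latticeDet v₁ v₂ := by
  rw [latticeDet, ← sq_eq_sq_iff_abs_eq_abs, eq_sub_of_add_eq' (o.inner_sq_add_areaForm_sq v₁ v₂)]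
  simp only [EuclideanSpace.norm_sq_eq, PiLp.inner_apply, Fin.sum_univ_two, Real.norm_eq_abs,
    sq_abs, RCLike.inner_apply, conj_trivial]
  ring

theorem lattice_subset_lattice_of_det_eq_one {a' b' c d : ℤ} (h : a' * d - b' * c = 1)
    (v₁ v₂ : Pt) :
    lattice v₁ v₂ ⊆ lattice ((a' : ℝ) • v₁ + (b' : ℝ) • v₂) ((c : ℝ) • v₁ + (d : ℝ) • v₂) := by
  rintro _ ⟨a, b, rfl⟩
  have hR : (a' : ℝ) * d - b' * c = 1 := by exact_mod_cast h
  refine ⟨d * a - c * b, a' * b - b' * a, ?_⟩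
  push_cast
  linear_combination (norm := module) hR • (-(a : ℝ) • v₁ - (b : ℝ) • v₂)

theorem lattice_det_le_general (v₁ v₂ : Pt)
    (hcover : (⋃ p ∈ lattice v₁ v₂, closedBall p 1) = Set.univ)
    (hshort : ∃ w ∈ lattice v₁ v₂, w ≠ 0 ∧ ‖w‖ ≤ 1) :
    latticeDet v₁ v₂ ≤ 1 + Real.sqrt 3 / 2 := by
  obtain ⟨w, ⟨a, b, rfl⟩, hw₀, hw⟩ := hshort
  have hab : a ≠ 0 ∨ b ≠ 0 := by
    by_contra! h
    simp [h.1, h.2] at hw₀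
  obtain ⟨g, a', b', c, d, hg, rfl, rfl, hdet⟩ := Int.exists_eq_mul_and_det_eq_one hab
  set W := (a' : ℝ) • v₁ + (b' : ℝ) • v₂
  have hW : ‖W‖ ≤ 1 := by
    have hgW : ((a' * g : ℤ) : ℝ) • v₁ + ((b' * g : ℤ) : ℝ) • v₂ = (g : ℝ) • W := by
      push_cast
      module
    rw [hgW, norm_smul, RCLike.norm_natCast] at hw
    exact (le_mul_of_one_le_left (norm_nonneg W) (by exact_mod_cast hg)).trans hw
  let o : Orientation ℝ Pt (Fin 2) := (EuclideanSpace.basisFun (Fin 2) ℝ).toBasis.orientation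
  have hWU : o.areaForm W ((c : ℝ) • v₁ + (d : ℝ) • v₂) = o.areaForm v₁ v₂ := by
    have hdetR : (a' : ℝ) * d - b' * c = 1 := by exact_mod_cast hdet
    rw [o.areaForm_smul_add_smul, hdetR, one_mul]
  by_contra! hD
  rw [← abs_areaForm_eq_latticeDet o, ← hWU] at hD
  obtain ⟨p, hp⟩ := o.exists_forall_one_lt_dist_smul_add_smul hW hD
  obtain ⟨q, hq, hpq⟩ := Set.iUnion₂_eq_univ_iff.mp hcover p
  obtain ⟨m, n, rfl⟩ := lattice_subset_lattice_of_det_eq_one hdet v₁ v₂ hq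
  exact (hp m n).not_ge (mem_closedBall.mp hpq)

/-- If the unit disks centered at the points of the lattice generated by `v₁, v₂` cover the
plane and some nonzero lattice vector has norm at most 1, then the lattice determinant is at
most `1 + √3/2`. -/
theorem lattice_det_le (v₁ v₂ : Pt)
    (hli : LinearIndependent ℝ ![v₁, v₂])
    (hcover : (⋃ p ∈ lattice v₁ v₂, closedBall p 1) = Set.univ)
    (hshort : ∃ w ∈ lattice v₁ v₂, w ≠ 0 ∧ ‖w‖ ≤ 1) :
    latticeDet v₁ v₂ ≤ 1 + Real.sqrt 3 / 2 :=
  lattice_det_le_general v₁ v₂ hcover hshort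

end
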